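/- arXiv:0708.4406 — 2 statements merged into one kernel-verified Lean document; each statement's English description precedes it below -/
import Mathlib

section
/- Let t be a fine infinite word over a finite alphabet A with witness s, and suppose that a·s = min(s) for every letter a ∈ A and every order making a minimal. Then F(t) = F(s); consequently t is an A-strict episturmian word. -/
/-- The prefix of length `k` of an infinite word `w : ℕ → A`. -/
def pref {A : Type*} (w : ℕ → A) (k : ℕ) : List A := (List.range k).map w

/-- `u` is a (finite) factor of the infinite word `w`. -/
def IsFactor {A : Type*} (w : ℕ → A) (u : List A) : Prop :=
  ∃ i : ℕ, u = (List.range u.length).map (fun j => w (i + j))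

/-- Prepend a letter to an infinite word. -/
def consW {A : Type*} (a : A) (s : ℕ → A) : ℕ → A := fun n => match n with
  | 0 => a
  | n + 1 => s n

/-- Concatenation of a finite word with an infinite word. -/
def catW {A : Type*} (u : List A) (w : ℕ → A) : ℕ → A := fun n =>
  if h : n < u.length then u.get ⟨n, h⟩ else w (n - u.length)

/-- `u` is the lexicographically smallest factor of `w` of length `k`,
w.r.t. the strict order `lt` on letters. -/
def IsMinFactor {A : Type*} (lt : A → A → Prop) (w : ℕ → A) (k : ℕ) (u : List A) : Prop :=
  IsFactor w u ∧ u.length = k ∧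
    ∀ v, IsFactor w v → v.length = k → u = v ∨ List.Lex lt u v

/-- `u` is the lexicographically greatest factor of `w` of length `k`. -/
def IsMaxFactor {A : Type*} (lt : A → A → Prop) (w : ℕ → A) (k : ℕ) (u : List A) : Prop :=
  IsFactor w u ∧ u.length = k ∧
    ∀ v, IsFactor w v → v.length = k → u = v ∨ List.Lex lt v u

/-- `m = min(w)`: every length-`k` prefix of `m` is the lexicographically
smallest factor of `w` of length `k`. -/
def IsMinWord {A : Type*} (lt : A → A → Prop) (w m : ℕ → A) : Prop :=
  ∀ k : ℕ, IsMinFactor lt w k (pref m k)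

/-- `m = max(w)`. -/
def IsMaxWord {A : Type*} (lt : A → A → Prop) (w m : ℕ → A) : Prop :=
  ∀ k : ℕ, IsMaxFactor lt w k (pref m k)

/-- The letter `z` is separating for `t`: every length-2 factor of `t` contains `z`. -/
def Separating {A : Type*} (z : A) (t : ℕ → A) : Prop :=
  ∀ u, IsFactor t u → u.length = 2 → z ∈ u

/-- The episturmian morphism `Ψ_z` on finite words: `z ↦ z`, `x ↦ zx` for `x ≠ z`. -/
def psiL {A : Type*} [DecidableEq A] (z : A) (u : List A) : List A :=
  u.flatMap (fun x => if x = z then [z] else [z, x])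

/-- `t = Ψ_z(y)` for infinite words: the `Ψ_z`-image of every prefix of `y`
is a prefix of `t`. -/
def PsiImage {A : Type*} [DecidableEq A] (z : A) (y t : ℕ → A) : Prop :=
  ∀ n : ℕ, psiL z (pref y n) = pref t (psiL z (pref y n)).length

/-- `u` is a left special factor of `w`. -/
def LeftSpecial {A : Type*} (w : ℕ → A) (u : List A) : Prop :=
  ∃ a b : A, a ≠ b ∧ IsFactor w (a :: u) ∧ IsFactor w (b :: u)

/-- `u` is a right special factor of `w`. -/
def RightSpecial {A : Type*} (w : ℕ → A) (u : List A) : Prop :=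
  ∃ a b : A, a ≠ b ∧ IsFactor w (u ++ [a]) ∧ IsFactor w (u ++ [b])

/-- `w` is a standard episturmian word: factors closed under reversal and
every left special factor is a prefix. -/
def StdEpisturmian {A : Type*} (w : ℕ → A) : Prop :=
  (∀ u, IsFactor w u → IsFactor w u.reverse) ∧
  (∀ u, LeftSpecial w u → u = pref w u.length)

/-- `w` is an `A`-strict standard episturmian word (standard Arnoux-Rauzy sequence):
standard episturmian and every prefix has every letter as a left extension. -/
def StrictStdEpisturmian {A : Type*} (w : ℕ → A) : Prop :=
  StdEpisturmian w ∧ ∀ (n : ℕ) (a : A), IsFactor w (a :: pref w n)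

/-- `w` is episturmian: factors closed under reversal and at most one right
special factor of each length. -/
def Episturmian {A : Type*} (w : ℕ → A) : Prop :=
  (∀ u, IsFactor w u → IsFactor w u.reverse) ∧
  (∀ u v, RightSpecial w u → RightSpecial w v → u.length = v.length → u = v)

/-- `w` is an `A`-strict episturmian word: it has the same set of factors as some
`A`-strict standard episturmian word. -/
def StrictEpisturmian {A : Type*} (w : ℕ → A) : Prop :=
  ∃ s : ℕ → A, StrictStdEpisturmian s ∧ ∀ u, IsFactor w u ↔ IsFactor s u

/-- `t` is fine: there is an infinite word `s` such that for every total order on the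
alphabet and every letter `a` minimal for that order, `min(t) = a·s`. -/
def Fine {A : Type*} (t : ℕ → A) : Prop :=
  ∃ s : ℕ → A, ∀ (l : LinearOrder A) (a : A), (∀ b, l.le a b) →
    IsMinWord l.lt t (consW a s)

/-!
For an order with least letter `a`, `min(s) = a·s` and `min(t) = a·s` say that `a·s` is
lexicographically below every suffix of `s` and of `t`. For an order in which a letter `x ≠ z = s 0`
is least and `z` greatest, this forces every occurrence of `x` to be followed by `z`; so `z` is
separating for both words, and up to a first letter both are images under `Ψ_z : z ↦ z, x ↦ zx`. The
lower bound passes to the preimages, while every factor of length at least two is covered by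
`Ψ_z(v)z` for a strictly shorter factor `v` of the preimage. Induction on the length then shows that
each factor of `t`, and the reversal of each factor of `s`, is a factor of `s`, because `Ψ_z(v)z`
reversed is `Ψ_z(ṽ)z`. Comparing the lower bounds for two different least letters forces every left
special factor of `s` to be a prefix, and `a·u` for a prefix `u` of `s` is a prefix of `min(s)`,
hence a factor of `s`.
-/

section Factors

variable {A : Type*}

def factorAt (w : ℕ → A) (i n : ℕ) : List A := (List.range n).map fun r => w (i + r)

def shift (w : ℕ → A) (j : ℕ) : ℕ → A := fun r => w (j + r)

@[simp] lemma length_factorAt (w : ℕ → A) (i n : ℕ) : (factorAt w i n).length = n := by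
  simp [factorAt]

lemma isFactor_iff {w : ℕ → A} {u : List A} : IsFactor w u ↔ ∃ i, u = factorAt w i u.length :=
  Iff.rfl

lemma isFactor_factorAt (w : ℕ → A) (i n : ℕ) : IsFactor w (factorAt w i n) :=
  ⟨i, by rw [length_factorAt]; rfl⟩

lemma pref_eq_factorAt (w : ℕ → A) (k : ℕ) : pref w k = factorAt w 0 k := by
  simp [pref, factorAt]

lemma factorAt_eq_factorAt_iff {f g : ℕ → A} {i j n : ℕ} :
    factorAt f i n = factorAt g j n ↔ ∀ r < n, f (i + r) = g (j + r) := by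
  simp [factorAt, List.map_inj_left]

lemma factorAt_add (w : ℕ → A) (i m n : ℕ) :
    factorAt w i (m + n) = factorAt w i m ++ factorAt w (i + m) n := by
  simp [factorAt, List.range_add, Function.comp_def, add_assoc]

lemma factorAt_succ (w : ℕ → A) (i n : ℕ) : factorAt w i (n + 1) = w i :: factorAt w (i + 1) n := by
  rw [add_comm, factorAt_add]
  simp [factorAt]

lemma factorAt_consW (c : A) (w : ℕ → A) (i n : ℕ) :
    factorAt (consW c w) (i + 1) n = factorAt w i n := by
  simp [factorAt, consW, add_right_comm]

lemma pref_consW_succ (c : A) (w : ℕ → A) (n : ℕ) : pref (consW c w) (n + 1) = c :: pref w n := by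
  rw [pref_eq_factorAt, factorAt_succ, factorAt_consW, pref_eq_factorAt]
  rfl

lemma factorAt_infix (w : ℕ → A) {i n j L : ℕ} (h₁ : j ≤ i) (h₂ : i + n ≤ j + L) :
    factorAt w i n <:+: factorAt w j L := by
  obtain ⟨a, rfl⟩ := Nat.exists_eq_add_of_le h₁
  obtain ⟨b, rfl⟩ : ∃ b, L = a + n + b := ⟨L - (a + n), by omega⟩
  exact ⟨_, _, by rw [factorAt_add, factorAt_add, ← add_assoc]⟩

lemma IsFactor.of_infix {w : ℕ → A} {u v : List A} (h : u <:+: v) (hv : IsFactor w v) :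
    IsFactor w u := by
  obtain ⟨p, q, rfl⟩ := h
  obtain ⟨i, hi⟩ := isFactor_iff.1 hv
  rw [List.length_append, List.length_append, factorAt_add, factorAt_add] at hi
  obtain ⟨hpu, -⟩ := List.append_inj hi (by simp)
  exact ⟨i + p.length, (List.append_inj hpu (by simp)).2⟩

lemma IsFactor.consW {w : ℕ → A} {u : List A} (c : A) (h : IsFactor w u) :
    IsFactor (consW c w) u := by
  obtain ⟨i, hi⟩ := isFactor_iff.1 h
  exact isFactor_iff.2 ⟨i + 1, by rw [factorAt_consW]; exact hi⟩

lemma IsFactor.of_forall_isFactor_pref {w x : ℕ → A} (h : ∀ k, IsFactor x (pref w k))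
    {u : List A} (hu : IsFactor w u) : IsFactor x u := by
  obtain ⟨i, hi⟩ := isFactor_iff.1 hu
  refine (h (i + u.length)).of_infix ?_
  rw [hi, pref_eq_factorAt]
  exact factorAt_infix w (Nat.zero_le i) (by simp)

@[simp] lemma shift_zero (w : ℕ → A) : shift w 0 = w := by
  funext r; simp [shift]

lemma shift_consW_succ (c : A) (w : ℕ → A) (j : ℕ) : shift (consW c w) (j + 1) = shift w j := by
  funext r; simp [shift, consW, add_right_comm]

lemma consW_shift (w : ℕ → A) (j : ℕ) : consW (w j) (shift w (j + 1)) = shift w j := by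
  funext r; cases r <;> simp [shift, consW, add_assoc, add_comm 1]

end Factors

section Orders

variable {A : Type*}

lemma exists_linearOrder_lt_of_rank_lt (rank : A → ℕ) :
    ∃ l : LinearOrder A, ∀ x y, rank x < rank y → l.lt x y := by
  classical
  let _ : LinearOrder A := linearOrderOfSTO WellOrderingRel
  refine ⟨LinearOrder.lift' (fun x => toLex (rank x, x)) fun x y h => by simp_all,
    fun x y h => ?_⟩
  exact Prod.Lex.toLex_lt_toLex.2 (Or.inl h)

lemma exists_linearOrder_bot (a : A) : ∃ l : LinearOrder A, ∀ b, l.le a b := by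
  classical
  obtain ⟨l, hl⟩ := exists_linearOrder_lt_of_rank_lt fun x => if x = a then 0 else 1
  let _ := l
  refine ⟨l, fun b => ?_⟩
  by_cases hb : b = a
  · exact hb ▸ le_rfl
  · exact (hl a b (by simp [hb])).le

lemma exists_linearOrder_bot_top {a c : A} (h : a ≠ c) :
    ∃ l : LinearOrder A, (∀ b, l.le a b) ∧ ∀ b, l.le b c := by
  classical
  obtain ⟨l, hl⟩ := exists_linearOrder_lt_of_rank_lt
    fun x => if x = a then 0 else if x = c then 2 else 1
  let _ := l
  refine ⟨l, fun b => ?_, fun b => ?_⟩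
  · by_cases hb : b = a
    · exact hb ▸ le_rfl
    · exact (hl a b (by split_ifs <;> simp_all)).le
  · by_cases hb : b = c
    · exact hb ▸ le_rfl
    · exact (hl b c (by split_ifs <;> simp_all [Ne.symm h])).le

end Orders

section Lex

variable {A : Type*}

lemma le_getElem_of_lex (l : LinearOrder A) {u v : List A} (h : u = v ∨ List.Lex l.lt u v)
    {m : ℕ} (hu : m < u.length) (hv : m < v.length) (hagree : ∀ r < m, u[r]? = v[r]?) :
    l.le u[m] v[m] := by
  let _ := l
  rcases h with rfl | h
  · exact le_rfl
  induction h generalizing m with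
  | nil => simp at hu
  | @cons a u v _ ih =>
    cases m with
    | zero => exact le_rfl
    | succ m => exact ih _ _ fun r hr => by simpa using hagree (r + 1) (by omega)
  | @rel a b u v hab =>
    cases m with
    | zero => exact hab.le
    | succ m => simpa [hab.ne] using hagree 0 (by omega)

def LexLE (l : LinearOrder A) (f g : ℕ → A) : Prop :=
  ∀ m, (∀ r < m, f r = g r) → l.le (f m) (g m)

lemma IsMinWord.lexLE_shift {l : LinearOrder A} {x m : ℕ → A} (h : IsMinWord l.lt x m) (j : ℕ) :
    LexLE l m (shift x j) := by
  intro M hagree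
  obtain ⟨-, -, hmin⟩ := h (M + 1)
  have := le_getElem_of_lex l (hmin _ (isFactor_factorAt x j (M + 1)) (by simp)) (m := M)
    (by simp [pref]) (by simp) fun r hr => by
      simp [pref, factorAt, hr.trans (Nat.lt_succ_self M), hagree r hr, shift]
  simpa [pref, factorAt, shift] using this

lemma LexLE.of_consW {l : LinearOrder A} {a : A} {f g : ℕ → A}
    (h : LexLE l (consW a f) (consW a g)) : LexLE l f g :=
  fun m hm => h (m + 1) fun r hr => by
    cases r with
    | zero => rfl
    | succ r => exact hm r (by omega)

lemma lexLE_consW_of_forall_le {l : LinearOrder A} {a b : A} {f g : ℕ → A}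
    (ha : ∀ c, l.le a c) (h : b = a → LexLE l f g) : LexLE l (consW a f) (consW b g) := by
  intro m hm
  cases m with
  | zero => exact ha b
  | succ m => exact h (hm 0 (by omega)).symm m fun r hr => hm (r + 1) (by omega)

lemma lexLE_of_head_ne {l : LinearOrder A} {f g : ℕ → A} (hle : l.le (f 0) (g 0))
    (hne : f 0 ≠ g 0) : LexLE l f g := by
  intro m hm
  cases m with
  | zero => exact hle
  | succ m => exact absurd (hm 0 (by omega)) hne

lemma eq_of_forall_lexLE {a : A} {f g : ℕ → A} {r : ℕ}
    (H : ∀ l : LinearOrder A, (∀ b, l.le a b) → LexLE l f g)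
    (hagree : ∀ q < r, f q = g q) (hne : f r ≠ g r) : f r = a := by
  by_contra hfa
  obtain ⟨l, hbot, htop⟩ := exists_linearOrder_bot_top (Ne.symm hfa)
  let _ := l
  exact hne (le_antisymm (H l hbot r hagree) (htop _))

lemma eqOn_of_forall_lexLE {a b : A} (hab : a ≠ b) {f g₁ g₂ : ℕ → A} {n : ℕ}
    (H₁ : ∀ l : LinearOrder A, (∀ c, l.le a c) → LexLE l f g₁)
    (H₂ : ∀ l : LinearOrder A, (∀ c, l.le b c) → LexLE l f g₂)
    (h : ∀ r < n, g₁ r = g₂ r) : ∀ r < n, f r = g₁ r := by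
  intro r
  induction r using Nat.strong_induction_on with
  | _ r ih =>
  intro hr
  by_contra hne
  have ha := eq_of_forall_lexLE H₁ (fun q hq => ih q hq (by omega)) hne
  have hb := eq_of_forall_lexLE H₂ (fun q hq => (ih q hq (by omega)).trans (h q (by omega)))
    (h r hr ▸ hne)
  exact hab (ha.symm.trans hb)

end Lex

section LexLowerBound

variable {A : Type*}

def LexLowerBound (s x : ℕ → A) : Prop :=
  ∀ (l : LinearOrder A) (a : A), (∀ b, l.le a b) → ∀ j, LexLE l (consW a s) (shift x j)

variable {s x : ℕ → A}

lemma lexLowerBound_of_forall_isMinWord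
    (h : ∀ (l : LinearOrder A) (a : A), (∀ b, l.le a b) → IsMinWord l.lt x (consW a s)) :
    LexLowerBound s x :=
  fun l a ha j => (h l a ha).lexLE_shift j

lemma LexLowerBound.lexLE_shift_succ (h : LexLowerBound s x) {l : LinearOrder A} {a : A}
    (ha : ∀ b, l.le a b) {j : ℕ} (hj : x j = a) : LexLE l s (shift x (j + 1)) := by
  have := h l a ha j
  rw [← consW_shift, hj] at this
  exact this.of_consW

lemma LexLowerBound.separating (h : LexLowerBound s x) (i : ℕ) : x i = s 0 ∨ x (i + 1) = s 0 := by
  by_cases hxi : x i = s 0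
  · exact Or.inl hxi
  obtain ⟨l, hbot, htop⟩ := exists_linearOrder_bot_top hxi
  let _ := l
  exact Or.inr (le_antisymm (htop _) (h.lexLE_shift_succ hbot rfl 0 (by simp)))

lemma LexLowerBound.consW_head (h : LexLowerBound s x) (hx : x 0 ≠ s 0) :
    LexLowerBound s (consW (s 0) x) := by
  intro l a ha j
  cases j with
  | zero =>
    rw [shift_zero]
    exact lexLE_consW_of_forall_le ha fun hsa => lexLE_of_head_ne (hsa ▸ ha _) hx.symm
  | succ j =>
    rw [shift_consW_succ]
    exact h l a ha j

lemma LexLowerBound.exists_head_eq (h : LexLowerBound s x) {u : List A} (hu : IsFactor x u) :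
    ∃ y, y 0 = s 0 ∧ LexLowerBound s y ∧ IsFactor y u := by
  by_cases hx : x 0 = s 0
  · exact ⟨x, hx, h, hu⟩
  · exact ⟨consW (s 0) x, rfl, h.consW_head hx, hu.consW _⟩

lemma LexLowerBound.eq_pref_of_leftSpecial (h : LexLowerBound s s) {u : List A}
    (hu : LeftSpecial s u) : u = pref s u.length := by
  obtain ⟨a, b, hab, ha, hb⟩ := hu
  obtain ⟨i, hi⟩ := isFactor_iff.1 ha
  obtain ⟨j, hj⟩ := isFactor_iff.1 hb
  rw [List.length_cons, factorAt_succ, List.cons.injEq] at hi hj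
  have hagree := eqOn_of_forall_lexLE hab
    (fun l hl => h.lexLE_shift_succ hl hi.1.symm) (fun l hl => h.lexLE_shift_succ hl hj.1.symm)
    (factorAt_eq_factorAt_iff.1 (hi.2.symm.trans hj.2))
  rw [pref_eq_factorAt, hi.2, length_factorAt, factorAt_eq_factorAt_iff]
  exact fun r hr => by simpa [shift] using (hagree r hr).symm

end LexLowerBound

section Psi

variable {A : Type*} [DecidableEq A] (z : A)

@[simp] lemma psiL_nil : psiL z [] = [] := rfl

lemma psiL_cons (c : A) (v : List A) :
    psiL z (c :: v) = (if c = z then [z] else [z, c]) ++ psiL z v := by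
  simp [psiL]

lemma psiL_append (v w : List A) : psiL z (v ++ w) = psiL z v ++ psiL z w :=
  List.flatMap_append

lemma length_psiL (v : List A) : (psiL z v).length = v.length + v.countP (· ≠ z) := by
  induction v with
  | nil => rfl
  | cons c v ih => by_cases hc : c = z <;> simp [psiL_cons, hc, ih] <;> omega

lemma countP_psiL (v : List A) : (psiL z v).countP (· ≠ z) = v.countP (· ≠ z) := by
  induction v with
  | nil => rfl
  | cons c v ih => by_cases hc : c = z <;> simp_all [psiL_cons]

lemma reverse_psiL_append (v : List A) : (psiL z v ++ [z]).reverse = psiL z v.reverse ++ [z] := by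
  induction v with
  | nil => rfl
  | cons c v ih =>
    rw [psiL_cons, List.append_assoc, List.reverse_append, ih, List.reverse_cons, psiL_append,
      psiL_cons, List.append_assoc]
    by_cases hc : c = z <;> simp [hc, psiL]

variable {z}

lemma head_eq_of_psiL_eq_cons {v : List A} {c : A} {T : List A} (h : psiL z v = c :: T) :
    c = z := by
  cases v with
  | nil => cases h
  | cons d v => by_cases hd : d = z <;> simp_all [psiL_cons]

lemma psiL_injective : Function.Injective (psiL z) := by
  intro v w h
  induction v generalizing w with
  | nil =>
    cases w with
    | nil => rfl
    | cons d w => by_cases hd : d = z <;> simp [psiL_cons, hd] at h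
  | cons c v ih =>
    cases w with
    | nil => by_cases hc : c = z <;> simp [psiL_cons, hc] at h
    | cons d w =>
      by_cases hc : c = z <;> by_cases hd : d = z <;>
        simp only [psiL_cons, hc, hd, if_true, if_false, List.cons_append, List.nil_append,
          List.cons.injEq, true_and] at h
      · rw [hc, hd, ih h]
      · exact absurd (head_eq_of_psiL_eq_cons h) hd
      · exact absurd (head_eq_of_psiL_eq_cons h.symm) hc
      · rw [h.1, ih h.2]

end Psi

section Desubstitution

variable {A : Type*}

/-- `y = Ψ_z(y')` for some infinite word `y'`, namely `y' = desubst z y`. -/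
structure Desubstitutable (z : A) (y : ℕ → A) : Prop where
  head : y 0 = z
  separating : ∀ i, y i = z ∨ y (i + 1) = z

lemma Desubstitutable.isFactor_cons_cons {z : A} {y : ℕ → A} (hd : Desubstitutable z y)
    {a : A} {u : List A} (h : IsFactor y (a :: u)) (ha : a ≠ z) : IsFactor y (z :: a :: u) := by
  obtain ⟨i, hi⟩ := isFactor_iff.1 h
  rw [List.length_cons, factorAt_succ, List.cons.injEq] at hi
  obtain ⟨i, rfl⟩ : ∃ k, i = k + 1 :=
    Nat.exists_eq_succ_of_ne_zero (by rintro rfl; exact ha (hi.1.trans hd.head))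
  refine isFactor_iff.2 ⟨i, ?_⟩
  rw [List.length_cons, List.length_cons, factorAt_succ, factorAt_succ, ← hi.1, ← hi.2,
    (hd.separating i).resolve_right (hi.1 ▸ ha)]

variable [DecidableEq A]

/-- The position in `y = Ψ_z(desubst z y)` of the block (`z` or `zx`) encoding the `n`-th letter. -/
def blockStart (z : A) (y : ℕ → A) : ℕ → ℕ
  | 0 => 0
  | n + 1 => blockStart z y n + if y (blockStart z y n + 1) = z then 1 else 2

def desubst (z : A) (y : ℕ → A) (n : ℕ) : A := y (blockStart z y n + 1)

variable {z : A} {s y : ℕ → A}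

lemma blockStart_strictMono : StrictMono (blockStart z y) :=
  strictMono_nat_of_lt_succ fun n => by simp only [blockStart]; split <;> omega

lemma blockStart_succ_le (n : ℕ) : blockStart z y (n + 1) ≤ blockStart z y n + 2 := by
  simp only [blockStart]; split <;> omega

lemma Desubstitutable.apply_blockStart (hd : Desubstitutable z y) (n : ℕ) :
    y (blockStart z y n) = z := by
  cases n with
  | zero => exact hd.head
  | succ n =>
    simp only [blockStart]
    split_ifs with h
    · exact h
    · exact (hd.separating _).resolve_left h

lemma Desubstitutable.apply_blockStart_succ_sub_one (hd : Desubstitutable z y) (n : ℕ) :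
    y (blockStart z y (n + 1) - 1) = desubst z y n := by
  simp only [blockStart, desubst]
  split_ifs with h
  · rw [Nat.add_sub_cancel, hd.apply_blockStart, h]
  · rfl

lemma Desubstitutable.exists_blockStart_eq (hd : Desubstitutable z y) {i : ℕ} (hi : y i = z) :
    ∃ n, blockStart z y n = i := by
  induction i using Nat.strong_induction_on with
  | _ i ih =>
  rcases i with _ | i
  · exact ⟨0, rfl⟩
  by_cases hprev : y i = z
  · obtain ⟨n, rfl⟩ := ih _ (by omega) hprev
    exact ⟨n + 1, by simp [blockStart, hi]⟩
  · obtain ⟨i, rfl⟩ : ∃ k, i = k + 1 :=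
      Nat.exists_eq_succ_of_ne_zero (by rintro rfl; exact hprev hd.head)
    obtain ⟨n, rfl⟩ := ih i (by omega) ((hd.separating i).resolve_right hprev)
    exact ⟨n + 1, by simp [blockStart, hprev]⟩

lemma Desubstitutable.factorAt_blockStart (hd : Desubstitutable z y) (n : ℕ) :
    factorAt y (blockStart z y n) (blockStart z y (n + 1) - blockStart z y n) =
      psiL z [desubst z y n] := by
  by_cases h : y (blockStart z y n + 1) = z <;>
    simp [blockStart, desubst, h, psiL, factorAt, List.range_succ, hd.apply_blockStart]

lemma Desubstitutable.psiL_factorAt (hd : Desubstitutable z y) (n m : ℕ) :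
    psiL z (factorAt (desubst z y) n m) =
      factorAt y (blockStart z y n) (blockStart z y (n + m) - blockStart z y n) := by
  induction m with
  | zero => simp [factorAt]
  | succ m ih =>
    have hmono : blockStart z y n ≤ blockStart z y (n + m) :=
      blockStart_strictMono.monotone (Nat.le_add_right n m)
    have hstep : blockStart z y (n + m) ≤ blockStart z y (n + m + 1) :=
      blockStart_strictMono.monotone (Nat.le_succ _)
    rw [factorAt_add, psiL_append, ih, show factorAt (desubst z y) (n + m) 1 = [desubst z y (n + m)]
      by simp [factorAt], ← hd.factorAt_blockStart, ← add_assoc,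
      show blockStart z y (n + m + 1) - blockStart z y n = (blockStart z y (n + m) - blockStart z y n)
        + (blockStart z y (n + m + 1) - blockStart z y (n + m)) by omega,
      factorAt_add, Nat.add_sub_cancel' hmono]

lemma Desubstitutable.psiL_factorAt_append (hd : Desubstitutable z y) (n m : ℕ) :
    psiL z (factorAt (desubst z y) n m) ++ [z] =
      factorAt y (blockStart z y n) (blockStart z y (n + m) - blockStart z y n + 1) := by
  rw [hd.psiL_factorAt, factorAt_add,
    Nat.add_sub_cancel' (blockStart_strictMono.monotone (Nat.le_add_right n m))]
  simp [factorAt, hd.apply_blockStart]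

lemma Desubstitutable.isFactor_psiL_append (hd : Desubstitutable z y) {v : List A}
    (hv : IsFactor (desubst z y) v) : IsFactor y (psiL z v ++ [z]) := by
  obtain ⟨n, hn⟩ := isFactor_iff.1 hv
  rw [hn, hd.psiL_factorAt_append]
  exact isFactor_factorAt _ _ _

lemma exists_psiL_append_eq_cons (v : List A) : ∃ T, psiL z v ++ [z] = z :: T := by
  cases h : psiL z v with
  | nil => exact ⟨[], rfl⟩
  | cons c T => exact ⟨T ++ [z], by rw [head_eq_of_psiL_eq_cons h]; rfl⟩

lemma Desubstitutable.isFactor_of_psiL_append (hd : Desubstitutable z y) {v : List A}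
    (h : IsFactor y (psiL z v ++ [z])) : IsFactor (desubst z y) v := by
  obtain ⟨i, hi⟩ := isFactor_iff.1 h
  have hstart : y i = z := by
    obtain ⟨T, hT⟩ := exists_psiL_append_eq_cons (z := z) v
    rw [hT, List.length_cons, factorAt_succ, List.cons.injEq] at hi
    exact hi.1.symm
  rw [List.length_append, List.length_singleton, factorAt_add] at hi
  obtain ⟨hψ, hend⟩ := List.append_inj hi (by simp)
  obtain ⟨n₀, rfl⟩ := hd.exists_blockStart_eq hstart
  obtain ⟨n₁, hn₁⟩ := hd.exists_blockStart_eq (i := blockStart z y n₀ + (psiL z v).length)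
    (by simpa [factorAt] using hend.symm)
  have hle : n₀ ≤ n₁ := (blockStart_strictMono (z := z) (y := y)).le_iff_le.1 (by omega)
  have hv : v = factorAt (desubst z y) n₀ (n₁ - n₀) := by
    refine psiL_injective (z := z) ?_
    rw [hd.psiL_factorAt, Nat.add_sub_cancel' hle, hn₁, Nat.add_sub_cancel_left, ← hψ]
  exact hv ▸ isFactor_factorAt _ _ _

lemma countP_factorAt_ge (y : ℕ → A) (i k : ℕ) :
    (if y i = z then 0 else 1) + (if y (i + k + 1) = z then 0 else 1) ≤
      (factorAt y i (k + 2)).countP (· ≠ z) := by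
  have hsplit : factorAt y i (k + 2) = [y i] ++ factorAt y (i + 1) k ++ [y (i + k + 1)] := by
    rw [show k + 2 = 1 + k + 1 by omega, factorAt_add, factorAt_add]
    simp [factorAt, add_comm 1 k, add_assoc]
  rw [hsplit, List.countP_append, List.countP_append]
  by_cases h₁ : y i = z <;> by_cases h₂ : y (i + k + 1) = z <;> simp [h₁, h₂]

lemma Desubstitutable.exists_infix_psiL_append (hd : Desubstitutable z y) (i : ℕ) {n : ℕ}
    (hn : 2 ≤ n) :
    ∃ v, IsFactor (desubst z y) v ∧ v.length < n ∧ factorAt y i n <:+: psiL z v ++ [z] := by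
  obtain ⟨k, rfl⟩ : ∃ k, n = k + 2 := ⟨n - 2, by omega⟩
  obtain ⟨p, hpz, hp⟩ : ∃ p, y p = z ∧ p + (if y i = z then 0 else 1) = i := by
    by_cases h : y i = z
    · exact ⟨i, h, by simp [h]⟩
    · obtain ⟨i, rfl⟩ : ∃ j, i = j + 1 :=
        Nat.exists_eq_succ_of_ne_zero (by rintro rfl; exact h hd.head)
      exact ⟨i, (hd.separating i).resolve_right h, by simp [h]⟩
  obtain ⟨q, hqz, hq⟩ : ∃ q, y q = z ∧ q = i + k + 1 + (if y (i + k + 1) = z then 0 else 1) := by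
    by_cases h : y (i + k + 1) = z
    · exact ⟨_, h, by simp [h]⟩
    · exact ⟨_, (hd.separating _).resolve_left h, by simp [h]⟩
  obtain ⟨n₀, rfl⟩ := hd.exists_blockStart_eq hpz
  obtain ⟨n₁, rfl⟩ := hd.exists_blockStart_eq hqz
  have hle : n₀ ≤ n₁ :=
    (blockStart_strictMono (z := z) (y := y)).le_iff_le.1 (by split_ifs at hp hq <;> omega)
  set v := factorAt (desubst z y) n₀ (n₁ - n₀)
  have hv : psiL z v ++ [z] =
      factorAt y (blockStart z y n₀) (blockStart z y n₁ - blockStart z y n₀ + 1) := by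
    rw [hd.psiL_factorAt_append, Nat.add_sub_cancel' hle]
  have hinf : factorAt y i (k + 2) <:+: psiL z v ++ [z] :=
    hv ▸ factorAt_infix y (by omega) (by split_ifs at hq <;> omega)
  refine ⟨v, isFactor_factorAt _ _ _, ?_, hinf⟩
  -- `|Ψ_z v| = |v| + #{letters ≠ z in v}`, and widening the factor to the enclosing `z`s adds one
  -- letter at an end only when the letter there is `≠ z`, which is then counted in `v`.
  have hcount := hinf.countP_le (p := (· ≠ z))
  have hends := countP_factorAt_ge (z := z) y i k
  have hlen := congrArg List.length hv
  rw [List.length_append, length_psiL] at hlen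
  have hz : [z].countP (· ≠ z) = 0 := by simp
  rw [List.countP_append, countP_psiL, hz, add_zero] at hcount
  simp only [length_factorAt, List.length_singleton] at hlen
  split_ifs at hp hq hends <;> omega

end Desubstitution

section Transfer

variable {A : Type*} [DecidableEq A] {z : A} {s y : ℕ → A}

lemma blockStart_shift (n m : ℕ) :
    blockStart z (shift y (blockStart z y n)) m + blockStart z y n = blockStart z y (n + m) := by
  induction m with
  | zero => simp [blockStart]
  | succ m ih =>
    have hnext : shift y (blockStart z y n) (blockStart z (shift y (blockStart z y n)) m + 1) =
        y (blockStart z y (n + m) + 1) := by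
      rw [← ih]; simp only [shift]; congr 1; omega
    rw [← add_assoc]
    simp only [blockStart, hnext]
    omega

lemma desubst_shift (n : ℕ) :
    desubst z (shift y (blockStart z y n)) = shift (desubst z y) n := by
  funext m
  simp only [desubst, shift, ← blockStart_shift n m]
  congr 1
  omega

lemma Desubstitutable.shift_blockStart (hd : Desubstitutable z y) (n : ℕ) :
    Desubstitutable z (shift y (blockStart z y n)) :=
  ⟨by simpa [shift] using hd.apply_blockStart n,
    fun i => by simpa [shift, add_assoc] using hd.separating (blockStart z y n + i)⟩

lemma Desubstitutable.eqOn_of_eqOn_desubst (hs : Desubstitutable z s) (hy : Desubstitutable z y)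
    {m : ℕ} (h : ∀ r < m, desubst z s r = desubst z y r) :
    blockStart z s m = blockStart z y m ∧ ∀ r ≤ blockStart z s m, s r = y r := by
  induction m with
  | zero => exact ⟨rfl, fun r hr => by rw [Nat.le_zero.1 hr, hs.head, hy.head]⟩
  | succ m ih =>
    obtain ⟨hb, hagree⟩ := ih fun r hr => h r (by omega)
    have hnext : s (blockStart z s m + 1) = y (blockStart z y m + 1) := h m (by omega)
    have hb' : blockStart z s (m + 1) = blockStart z y (m + 1) := by
      simp only [blockStart]
      rw [hnext, hb]
    refine ⟨hb', fun r hr => ?_⟩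
    have := blockStart_succ_le (z := z) (y := s) m
    rcases (by omega : r ≤ blockStart z s m ∨ r = blockStart z s m + 1 ∨ r = blockStart z s (m + 1))
      with hr | rfl | rfl
    · exact hagree r hr
    · rw [hnext, hb]
    · rw [hs.apply_blockStart, hb', hy.apply_blockStart]

lemma Desubstitutable.lexLE_desubst (hs : Desubstitutable z s) (hy : Desubstitutable z y)
    {l : LinearOrder A} (h : LexLE l s y) : LexLE l (desubst z s) (desubst z y) := by
  intro m hm
  obtain ⟨hb, hagree⟩ := hs.eqOn_of_eqOn_desubst hy hm
  show l.le (s (blockStart z s m + 1)) (y (blockStart z y m + 1))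
  rw [← hb]
  exact h _ fun r hr => hagree r (by omega)

lemma LexLowerBound.desubst (hs : Desubstitutable z s) (hy : Desubstitutable z y)
    (h : LexLowerBound s y) : LexLowerBound (desubst z s) (desubst z y) := by
  intro l a ha j
  rw [← consW_shift]
  refine lexLE_consW_of_forall_le ha fun hja => ?_
  rw [← desubst_shift]
  refine hs.lexLE_desubst (hy.shift_blockStart _) ?_
  have hpos : 0 < blockStart z y (j + 1) := blockStart_strictMono (Nat.succ_pos j)
  have := h.lexLE_shift_succ ha ((hy.apply_blockStart_succ_sub_one j).trans hja)
  rwa [Nat.sub_add_cancel hpos] at this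

lemma Desubstitutable.isFactor_cons_pref_desubst (hd : Desubstitutable z s)
    (hext : ∀ n a, IsFactor s (a :: pref s n)) (n : ℕ) (a : A) :
    IsFactor (desubst z s) (a :: pref (desubst z s) n) := by
  refine hd.isFactor_of_psiL_append ?_
  have hpref : psiL z (pref (desubst z s) n) ++ [z] = pref s (blockStart z s n + 1) := by
    rw [pref_eq_factorAt, hd.psiL_factorAt_append, pref_eq_factorAt, zero_add]
    rfl
  by_cases ha : a = z
  · rw [psiL_cons, if_pos ha, List.append_assoc, hpref]
    exact hext _ z
  · rw [psiL_cons, if_neg ha, List.append_assoc, hpref]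
    exact hd.isFactor_cons_cons (hext _ a) ha

end Transfer

theorem LexLowerBound.isFactor_and_isFactor_reverse {A : Type*} {s x : ℕ → A}
    (hss : LexLowerBound s s) (hext : ∀ n a, IsFactor s (a :: pref s n))
    (hsx : LexLowerBound s x) {u : List A} (hu : IsFactor x u) :
    IsFactor s u ∧ IsFactor s u.reverse := by
  classical
  induction hn : u.length using Nat.strong_induction_on generalizing s x u with
  | _ n ih =>
  subst hn
  rcases Nat.lt_or_ge u.length 2 with hlen | hlen
  · match u, hlen with
    | [], _ => exact ⟨⟨0, rfl⟩, ⟨0, rfl⟩⟩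
    | [c], _ => exact ⟨hext 0 c, hext 0 c⟩
  obtain ⟨y, hy0, hsy, hyu⟩ := hsx.exists_head_eq hu
  have hds : Desubstitutable (s 0) s := ⟨rfl, hss.separating⟩
  have hdy : Desubstitutable (s 0) y := ⟨hy0, hsy.separating⟩
  obtain ⟨i, hi⟩ := isFactor_iff.1 hyu
  obtain ⟨v, hv, hvlen, hinf⟩ := hdy.exists_infix_psiL_append i hlen
  rw [← hi] at hinf
  obtain ⟨hv₁, hv₂⟩ := ih v.length hvlen (hss.desubst hds hds)
    (hds.isFactor_cons_pref_desubst hext) (hsy.desubst hds hdy) hv rfl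
  refine ⟨(hds.isFactor_psiL_append hv₁).of_infix hinf, (hds.isFactor_psiL_append hv₂).of_infix ?_⟩
  rw [← reverse_psiL_append]
  exact List.reverse_infix.2 hinf

theorem stmt_11_general {A : Type*} (t s : ℕ → A)
    (hfine : ∀ (l : LinearOrder A) (a : A), (∀ b, l.le a b) → IsMinWord l.lt t (consW a s))
    (hAR : ∀ (l : LinearOrder A) (a : A), (∀ b, l.le a b) → IsMinWord l.lt s (consW a s)) :
    (∀ u : List A, IsFactor t u ↔ IsFactor s u) ∧ StrictEpisturmian t := by
  have hss := lexLowerBound_of_forall_isMinWord hAR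
  have hst := lexLowerBound_of_forall_isMinWord hfine
  have hext : ∀ n a, IsFactor s (a :: pref s n) := fun n a => by
    obtain ⟨l, hl⟩ := exists_linearOrder_bot a
    simpa [pref_consW_succ] using (hAR l a hl (n + 1)).1
  have hF : ∀ u, IsFactor t u ↔ IsFactor s u := fun u =>
    ⟨fun hu => (hss.isFactor_and_isFactor_reverse hext hst hu).1, fun hu => by
      obtain ⟨l, hl⟩ := exists_linearOrder_bot (s 0)
      exact IsFactor.of_forall_isFactor_pref (fun k => (hfine l _ hl k).1) (hu.consW (s 0))⟩
  refine ⟨hF, s, ⟨⟨fun u hu => (hss.isFactor_and_isFactor_reverse hext hss hu).2,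
    fun u hu => hss.eq_pref_of_leftSpecial hu⟩, hext⟩, hF⟩

/-- If `t` is fine with witness `s` and `a·s = min(s)` for every letter `a` and order
making `a` minimal, then `F(t) = F(s)`; consequently `t` is an `A`-strict
episturmian word. -/
theorem stmt_11 {A : Type*} [Fintype A] (t s : ℕ → A)
    (hfine : ∀ (l : LinearOrder A) (a : A), (∀ b, l.le a b) → IsMinWord l.lt t (consW a s))
    (hAR : ∀ (l : LinearOrder A) (a : A), (∀ b, l.le a b) → IsMinWord l.lt s (consW a s)) :
    (∀ u : List A, IsFactor t u ↔ IsFactor s u) ∧ StrictEpisturmian t :=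
  stmt_11_general t s hfine hAR
end

section
/- Let v be a B-strict standard episturmian word over B = A \ {x}, where A is a finite alphabet and x ∉ B, and let t = ṽ_p · x · v for some p ≥ 0. Then t is fine over A: for every letter a ∈ A and every total order on A with a minimal, min(t) = a·v. -/
/-!
Every factor of `t = ṽ_p x v` is either a factor of `v` (factors of `v` are closed under
reversal) or of the form `ṽ_j x v[0, k)`.

If `a ≠ x`, then `a v[0, k)` is lexicographically least among the factors of `v` of its length:
at the first position where it differs from a factor `w`, their common prefix `a v[0, i)` is right
special, hence the reversal of a prefix of `v`, so `a = v i`, the letter that `a v` has there, and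
`a` is minimal. Applied to `ṽ_j`, the same comparison handles the factors through `x`.

If `a = x`, then `x` occurs in `t` only once, so the only factors starting with `x` are the
prefixes of `x v`, and all other factors start with a larger letter.
-/

namespace List.Lex

theorem append_of_length_eq {α : Type*} {r : α → α → Prop} :
    ∀ {u₁ w₁ : List α} (u₂ w₂ : List α), u₁.length = w₁.length →
      Lex r u₁ w₁ → Lex r (u₁ ++ u₂) (w₁ ++ w₂)
  | [], _ :: _, _, _, hl, .nil => by simp at hl
  | _ :: _, _ :: _, _, _, _, .rel h => .rel h
  | _ :: _, _ :: _, u₂, w₂, hl, .cons h =>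
    .cons (append_of_length_eq u₂ w₂ (by simpa using hl) h)

end List.Lex

section Words

variable {A : Type*}

def seg (w : ℕ → A) (i k : ℕ) : List A := (List.range k).map (fun j => w (i + j))

@[simp] lemma seg_length (w : ℕ → A) (i k : ℕ) : (seg w i k).length = k := by simp [seg]

@[simp] lemma getElem_seg (w : ℕ → A) (i k j : ℕ) (h : j < (seg w i k).length) :
    (seg w i k)[j] = w (i + j) := by simp [seg]

lemma isFactor_iff_exists_seg {w : ℕ → A} {u : List A} :
    IsFactor w u ↔ ∃ i, u = seg w i u.length := Iff.rfl

lemma isFactor_seg (w : ℕ → A) (i k : ℕ) : IsFactor w (seg w i k) :=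
  ⟨i, by rw [seg_length]; rfl⟩

lemma seg_add (w : ℕ → A) (i m n : ℕ) : seg w i (m + n) = seg w i m ++ seg w (i + m) n := by
  simp only [seg, List.range_add, List.map_append, List.map_map]
  congr 1
  exact List.map_congr_left fun j _ => by simp [Nat.add_assoc]

lemma seg_succ (w : ℕ → A) (i k : ℕ) : seg w i (1 + k) = w i :: seg w (i + 1) k := by
  rw [seg_add]
  simp [seg]

lemma seg_zero_eq_pref (w : ℕ → A) (k : ℕ) : seg w 0 k = pref w k := by simp [seg, pref]

@[simp] lemma pref_zero (w : ℕ → A) : pref w 0 = [] := rfl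

@[simp] lemma pref_length (w : ℕ → A) (k : ℕ) : (pref w k).length = k := by simp [pref]

lemma pref_succ (w : ℕ → A) (k : ℕ) : pref w (k + 1) = pref w k ++ [w k] := by
  simp [pref, List.range_succ]

lemma reverse_pref_succ (w : ℕ → A) (k : ℕ) :
    (pref w (k + 1)).reverse = w k :: (pref w k).reverse := by
  simp [pref_succ]

lemma pref_add (w : ℕ → A) (m n : ℕ) : pref w (m + n) = pref w m ++ seg w m n := by
  rw [← seg_zero_eq_pref, seg_add, seg_zero_eq_pref, Nat.zero_add]

lemma pref_consW (a : A) (s : ℕ → A) (k : ℕ) : pref (consW a s) (k + 1) = a :: pref s k := by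
  simp [pref, List.range_succ_eq_map, consW]

lemma isFactor_nil (w : ℕ → A) : IsFactor w [] := ⟨0, rfl⟩

lemma IsFactor.of_append {w : ℕ → A} {u u' : List A} (h : IsFactor w (u ++ u')) :
    IsFactor w u := by
  obtain ⟨i, hi⟩ := isFactor_iff_exists_seg.1 h
  rw [List.length_append, seg_add] at hi
  exact ⟨i, (List.append_inj hi (seg_length _ _ _).symm).1⟩

lemma isMinWord_consW {lt : A → A → Prop} {t s : ℕ → A} {a : A}
    (hfac : ∀ k, IsFactor t (a :: pref s k))
    (hmin : ∀ k w, IsFactor t w → w.length = k + 1 →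
      a :: pref s k = w ∨ List.Lex lt (a :: pref s k) w) :
    IsMinWord lt t (consW a s)
  | 0 => ⟨isFactor_nil t, rfl, fun w _ hw => .inl (List.eq_nil_of_length_eq_zero hw).symm⟩
  | k + 1 => by
    rw [pref_consW]
    exact ⟨hfac k, by simp, hmin k⟩

end Words

section RevPrefCat

variable {A : Type*} (v : ℕ → A) (x : A) (p : ℕ)

/-- The word `ṽ_p x v`. -/
def revPrefCat : ℕ → A := catW ((pref v p).reverse ++ [x]) v

lemma revPrefCat_of_lt {i : ℕ} (h : i < p) : revPrefCat v x p i = v (p - 1 - i) := by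
  simp [revPrefCat, catW, h, Nat.lt_succ_of_lt h, List.getElem_append_left, pref]

lemma revPrefCat_self : revPrefCat v x p p = x := by
  simp [revPrefCat, catW]

lemma revPrefCat_add (j : ℕ) : revPrefCat v x p (p + 1 + j) = v j := by
  simp only [revPrefCat, catW]
  rw [dif_neg (by simp; omega)]
  simp

lemma seg_revPrefCat_add (i k : ℕ) : seg (revPrefCat v x p) (p + 1 + i) k = seg v i k := by
  unfold seg
  congr 1
  funext j
  rw [Nat.add_assoc (p + 1), revPrefCat_add]

lemma seg_revPrefCat_of_add_le {i k : ℕ} (h : i + k ≤ p) :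
    seg (revPrefCat v x p) i k = (seg v (p - i - k) k).reverse := by
  refine List.ext_getElem (by simp) fun j hj _ => ?_
  simp only [seg_length] at hj
  simp only [getElem_seg, List.getElem_reverse, seg_length,
    revPrefCat_of_lt v x p (show i + j < p by omega)]
  congr 1
  omega

lemma seg_revPrefCat_straddle {i : ℕ} (h : i ≤ p) (k : ℕ) :
    seg (revPrefCat v x p) i (p - i + (1 + k)) = (pref v (p - i)).reverse ++ x :: pref v k := by
  rw [seg_add, seg_revPrefCat_of_add_le v x p (by omega), Nat.add_sub_cancel' h, seg_succ,
    revPrefCat_self, Nat.sub_self, seg_zero_eq_pref]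
  simpa [seg_zero_eq_pref] using seg_revPrefCat_add v x p 0 k

variable {v x p}

lemma IsFactor.revPrefCat {u : List A} (h : IsFactor v u) : IsFactor (revPrefCat v x p) u := by
  obtain ⟨i, hi⟩ := isFactor_iff_exists_seg.1 h
  exact ⟨p + 1 + i, by rw [← seg_revPrefCat_add v x p] at hi; exact hi⟩

lemma isFactor_revPrefCat_straddle {j : ℕ} (h : j ≤ p) (k : ℕ) :
    IsFactor (revPrefCat v x p) ((pref v j).reverse ++ x :: pref v k) := by
  have := isFactor_seg (revPrefCat v x p) (p - j) (p - (p - j) + (1 + k))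
  rwa [seg_revPrefCat_straddle v x p (Nat.sub_le p j), Nat.sub_sub_self h] at this

lemma isFactor_revPrefCat_cases (hrev : ∀ u, IsFactor v u → IsFactor v u.reverse) {u : List A}
    (h : IsFactor (revPrefCat v x p) u) :
    IsFactor v u ∨ ∃ j k, u = (pref v j).reverse ++ x :: pref v k := by
  obtain ⟨i, hi⟩ := isFactor_iff_exists_seg.1 h
  rcases lt_or_ge p i with hpi | hip
  · obtain ⟨i', rfl⟩ : ∃ i', i = p + 1 + i' := ⟨i - (p + 1), by omega⟩
    rw [seg_revPrefCat_add] at hi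
    exact .inl ⟨i', hi⟩
  rcases le_or_gt (i + u.length) p with hin | hpin
  · rw [seg_revPrefCat_of_add_le v x p hin] at hi
    have hu : IsFactor v u.reverse := by
      rw [hi, List.reverse_reverse]
      exact isFactor_seg _ _ _
    simpa using Or.inl (hrev _ hu)
  · obtain ⟨k, hk⟩ : ∃ k, u.length = p - i + (1 + k) := ⟨i + u.length - p - 1, by omega⟩
    rw [hk, seg_revPrefCat_straddle v x p hip] at hi
    exact .inr ⟨_, _, hi⟩

end RevPrefCat

section Episturmian

variable {A : Type*} {v : ℕ → A}

lemma isFactor_pref (w : ℕ → A) (k : ℕ) : IsFactor w (pref w k) :=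
  ⟨0, by rw [pref_length]; exact (seg_zero_eq_pref w k).symm⟩

lemma IsFactor.exists_apply_eq {w : ℕ → A} {u : List A} {b : A} (h : IsFactor w u)
    (hb : b ∈ u) : ∃ i, w i = b := by
  obtain ⟨i, hi⟩ := isFactor_iff_exists_seg.1 h
  rw [hi] at hb
  simp only [seg, List.mem_map] at hb
  obtain ⟨j, -, hj⟩ := hb
  exact ⟨i + j, hj⟩

lemma eq_pref_of_isFactor_revPrefCat_cons {x : A} {p : ℕ} (hvx : ∀ i, v i ≠ x)
    (hrev : ∀ u, IsFactor v u → IsFactor v u.reverse) {u : List A}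
    (h : IsFactor (revPrefCat v x p) (x :: u)) : u = pref v u.length := by
  rcases isFactor_revPrefCat_cases hrev h with hv | ⟨j, k, hu⟩
  · obtain ⟨i, hi⟩ := hv.exists_apply_eq List.mem_cons_self
    exact absurd hi (hvx i)
  cases j with
  | zero =>
    rw [pref_zero, List.reverse_nil, List.nil_append, List.cons.injEq] at hu
    rw [hu.2, pref_length]
  | succ j =>
    rw [reverse_pref_succ, List.cons_append, List.cons.injEq] at hu
    exact absurd hu.1.symm (hvx j)

lemma RightSpecial.reverse_eq_pref (hstd : StdEpisturmian v) {c : List A} (h : RightSpecial v c) :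
    c.reverse = pref v c.length := by
  obtain ⟨d, e, hde, hd, he⟩ := h
  have hls : LeftSpecial v c.reverse :=
    ⟨d, e, hde, by simpa using hstd.1 _ hd, by simpa using hstd.1 _ he⟩
  simpa using hstd.2 _ hls

variable [LinearOrder A] {a : A}

lemma cons_pref_le_of_isFactor (hstd : StdEpisturmian v) (ha : ∀ b, a ≤ b)
    (hpref : ∀ n, IsFactor v (a :: pref v n)) (k : ℕ) (w : List A) (hw : IsFactor v w)
    (hwl : w.length = k + 1) : a :: pref v k = w ∨ List.Lex (· < ·) (a :: pref v k) w := by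
  induction k generalizing w with
  | zero =>
    obtain ⟨e, rfl⟩ := List.length_eq_one_iff.1 hwl
    rcases (ha e).eq_or_lt with rfl | hlt
    · exact .inl rfl
    · exact .inr (.rel hlt)
  | succ k ih =>
    obtain ⟨w, e, rfl⟩ : ∃ w' e, w = w' ++ [e] :=
      ⟨w.dropLast, w.getLast (List.ne_nil_of_length_eq_add_one hwl),
        (List.dropLast_append_getLast _).symm⟩
    rw [pref_succ, ← List.cons_append]
    rcases ih w hw.of_append (by simpa using hwl) with rfl | hlt
    · by_cases he : v k = e
      · exact .inl (by rw [he])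
      have hrs : RightSpecial v (a :: pref v k) :=
        ⟨v k, e, he, by simpa [pref_succ] using hpref (k + 1), hw⟩
      have hav : a = v k := by
        have := hrs.reverse_eq_pref hstd
        rw [List.length_cons, pref_succ, List.reverse_cons] at this
        simpa using (List.append_inj' this rfl).2
      have hlt : v k < e := hav ▸ lt_of_le_of_ne (ha e) (by rwa [hav])
      exact .inr (List.Lex.append_left _ (.rel hlt) _)
    · exact .inr (hlt.append_of_length_eq _ _ (by simp at hwl; simp [hwl]))

lemma cons_pref_lex_straddle {x : A} (hstd : StdEpisturmian v) (ha : ∀ b, a ≤ b)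
    (hpref : ∀ n, IsFactor v (a :: pref v n)) (hax : a ≠ x) (j k : ℕ) :
    List.Lex (· < ·) (a :: pref v (j + k)) ((pref v j).reverse ++ x :: pref v k) := by
  have hax' : a < x := lt_of_le_of_ne (ha x) hax
  cases j with
  | zero => simpa using List.Lex.rel hax'
  | succ j =>
    have hsplit : pref v (j + 1 + k) = pref v j ++ v j :: seg v (j + 1) k := by
      rw [Nat.add_assoc, pref_add, seg_succ]
    rw [hsplit, ← List.cons_append]
    rcases cons_pref_le_of_isFactor hstd ha hpref j _ (hstd.1 _ (isFactor_pref v (j + 1)))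
      (by simp) with heq | hlt
    · have hav : a = v j := by
        rw [reverse_pref_succ] at heq
        exact (List.cons.inj heq).1
      rw [← heq]
      exact List.Lex.append_left _ (.rel (hav ▸ hax')) _
    · exact hlt.append_of_length_eq _ _ (by simp)

lemma isMinWord_revPrefCat_self {x : A} {p : ℕ} (hvx : ∀ i, v i ≠ x)
    (hrev : ∀ u, IsFactor v u → IsFactor v u.reverse) (hx : ∀ b, x ≤ b) :
    IsMinWord (· < ·) (revPrefCat v x p) (consW x v) := by
  have hfac k : IsFactor (revPrefCat v x p) (x :: pref v k) := by
    simpa using isFactor_revPrefCat_straddle (Nat.zero_le p) k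
  refine isMinWord_consW hfac ?_
  rintro k (_ | ⟨b, w⟩) hw hwl
  · simp at hwl
  by_cases hb : b = x
  · subst hb
    rw [eq_pref_of_isFactor_revPrefCat_cons hvx hrev hw]
    simp only [List.length_cons, Nat.add_right_cancel_iff] at hwl
    exact .inl (by rw [hwl])
  · exact .inr (.rel (lt_of_le_of_ne (hx b) (Ne.symm hb)))

lemma isMinWord_revPrefCat_of_ne {x : A} {p : ℕ} (hstd : StdEpisturmian v) (ha : ∀ b, a ≤ b)
    (hpref : ∀ n, IsFactor v (a :: pref v n)) (hax : a ≠ x) :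
    IsMinWord (· < ·) (revPrefCat v x p) (consW a v) := by
  refine isMinWord_consW (fun k => (hpref k).revPrefCat) fun k w hw hwl => ?_
  rcases isFactor_revPrefCat_cases hstd.1 hw with hv | ⟨j, k', rfl⟩
  · exact cons_pref_le_of_isFactor hstd ha hpref k w hv hwl
  · obtain rfl : k = j + k' := by simp at hwl; omega
    exact .inr (cons_pref_lex_straddle hstd ha hpref hax j k')

end Episturmian

theorem stmt_13_general {A : Type*} (x : A) (v : ℕ → A) (hvx : ∀ i : ℕ, v i ≠ x)
    (hstd : StdEpisturmian v)
    (hstrict : ∀ (n : ℕ) (b : A), b ≠ x → IsFactor v (b :: pref v n)) (p : ℕ) :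
    ∀ (l : LinearOrder A) (a : A), (∀ b, l.le a b) →
      IsMinWord l.lt (catW ((pref v p).reverse ++ [x]) v) (consW a v) := by
  intro l a ha
  let _ : LinearOrder A := l
  change IsMinWord (· < ·) (revPrefCat v x p) (consW a v)
  by_cases hax : a = x
  · subst a
    exact isMinWord_revPrefCat_self hvx hstd.1 ha
  · exact isMinWord_revPrefCat_of_ne hstd ha (fun n => hstrict n a hax) hax

/-- If `v` is a `B`-strict standard episturmian word over `B = A \ {x}` and
`t = ṽ_p · x · v`, then `t` is fine with witness `v`. -/
theorem stmt_13 {A : Type*} [Fintype A] (x : A) (v : ℕ → A) (hvx : ∀ i : ℕ, v i ≠ x)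
    (hstd : StdEpisturmian v)
    (hstrict : ∀ (n : ℕ) (b : A), b ≠ x → IsFactor v (b :: pref v n)) (p : ℕ) :
    ∀ (l : LinearOrder A) (a : A), (∀ b, l.le a b) →
      IsMinWord l.lt (catW ((pref v p).reverse ++ [x]) v) (consW a v) :=
  stmt_13_general x v hvx hstd hstrict p
end
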